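/- arXiv:2410.23917 — 5 statements merged into one kernel-verified Lean document; each statement's English description precedes it below -/
import Mathlib

section
/- Let (H, ⟨·,·⟩) be a real Hilbert space with norm ‖·‖ and let D ⊆ H be a dense linear subspace. Let q : D × D → ℝ be a symmetric bilinear form such that: (a) q is semi-bounded from below, i.e. there exists c ∈ ℝ with q(u,u) ≥ c‖u‖² for all u ∈ D; (b) there exist a nondecreasing sequence of real numbers (ν_i)_{i≥1} and an orthonormal Hilbert basis (g_i)_{i≥1} of H with g_i ∈ D and q(g_i, v) = ν_i ⟨g_i, v⟩ for all i ≥ 1 and all v ∈ D. Let N ≥ 1 and m ≥ 1 be integers, let F ⊆ D be an m-dimensional linear subspace, and let ξ_1 ≤ … ≤ ξ_m be the eigenvalues of the restriction of q to F, i.e. there exists an orthonormal basis (f_1,…,f_m) of F such that q(f_i, f) = ξ_i ⟨f_i, f⟩ for all f ∈ F and all i. Assume there exist positive constants γ and δ such that: (H1) 0 < δ < γ/√2; (H2) |ν_{N+i−1}| ≤ γ for all i ∈ {1,…,m}, ν_{N+m} ≥ γ, and, if N ≥ 2, ν_{N−1} ≤ −γ; (H3) |q(φ, g)| ≤ δ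 ‖φ‖ ‖g‖ for all g ∈ D and all φ ∈ F. Then |ν_{N+i−1} − ξ_i| ≤ 4δ²/γ for every i ∈ {1,…,m}. -/
/-!
Expand `φ ∈ F` in the eigenbasis `(g_j)`: `q(φ, φ) = ∑ ν_j ⟪g_j, φ⟫²`, and testing (H3) against
`w = ∑ ν_j ⟪g_j, φ⟫ g_j` gives `∑ ν_j² ⟪g_j, φ⟫² ≤ δ² ‖φ‖²`. Outside the window
`g_N, …, g_{N+m-1}` we have `|ν_j| ≥ γ`, so the parts of `q(φ, φ)` and of `‖φ‖²` carried by the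
eigenvectors outside the window are at most `δ² ‖φ‖² / γ` and `δ² ‖φ‖² / γ²`.
A dimension count gives a nonzero `φ ∈ F` orthogonal to `f_1, …, f_{i-1}` and to
`g_{N+i}, …, g_{N+m-1}`; for it `ξ_i ‖φ‖² ≤ q(φ, φ) ≤ (ν_{N+i-1} + 2δ²/γ) ‖φ‖²`.
The reverse inequality is the same argument applied to `-q`.
-/

open scoped InnerProductSpace

section Sums

variable {ι : Type*}

theorem sum_mul_sq_le_of_ne_zero {s : Finset ι} {l a : ι → ℝ} {μ : ℝ}
    (h : ∀ j ∈ s, a j ≠ 0 → l j ≤ μ) : ∑ j ∈ s, l j * a j ^ 2 ≤ μ * ∑ j ∈ s, a j ^ 2 := by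
  rw [Finset.mul_sum]
  refine Finset.sum_le_sum fun j hj => ?_
  by_cases ha : a j = 0
  · simp [ha]
  · exact mul_le_mul_of_nonneg_right (h j hj ha) (sq_nonneg _)

theorem le_sum_mul_sq_of_ne_zero {s : Finset ι} {l a : ι → ℝ} {μ : ℝ}
    (h : ∀ j ∈ s, a j ≠ 0 → μ ≤ l j) : μ * ∑ j ∈ s, a j ^ 2 ≤ ∑ j ∈ s, l j * a j ^ 2 := by
  simpa [neg_mul, Finset.sum_neg_distrib] using
    sum_mul_sq_le_of_ne_zero (l := -l) (μ := -μ) fun j hj ha => neg_le_neg (h j hj ha)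

theorem abs_sub_sum_le_of_hasSum {x y : ι → ℝ} {X B : ℝ} (hx : HasSum x X) (s : Finset ι)
    (hy0 : ∀ j, 0 ≤ y j) (hyB : ∀ t : Finset ι, ∑ j ∈ t, y j ≤ B)
    (hxy : ∀ j ∉ s, |x j| ≤ y j) : |X - ∑ j ∈ s, x j| ≤ B := by
  classical
  have hy : Summable y := summable_of_sum_le hy0 hyB
  have hs : HasSum (fun j => if j ∈ s then x j else 0) (∑ j ∈ s, x j) := by
    simpa using hasSum_sum_of_ne_finset_zero (f := fun j => if j ∈ s then x j else 0) (s := s)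
      (by simp_all)
  calc |X - ∑ j ∈ s, x j| ≤ ∑' j, y j :=
        (hx.sub hs).norm_le_of_bounded hy.hasSum fun j => by
          by_cases hj : j ∈ s <;> simp [hj, hy0, hxy]
    _ ≤ B := hy.tsum_le_of_sum_le hyB

theorem le_mul_add_of_window {l a : ι → ℝ} {Q n K γ μ : ℝ}
    (hQ : HasSum (fun j => l j * a j ^ 2) Q) (hn : HasSum (fun j => a j ^ 2) n)
    (hK : ∀ t : Finset ι, ∑ j ∈ t, (l j * a j) ^ 2 ≤ K) {W : Finset ι} (hγ : 0 < γ)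
    (hout : ∀ j ∉ W, γ ≤ |l j|) (hμ : |μ| ≤ γ)
    (hW : ∑ j ∈ W, l j * a j ^ 2 ≤ μ * ∑ j ∈ W, a j ^ 2) : Q ≤ μ * n + 2 * K / γ := by
  have hQW : |Q - ∑ j ∈ W, l j * a j ^ 2| ≤ K / γ := by
    refine abs_sub_sum_le_of_hasSum hQ W (y := fun j => (l j * a j) ^ 2 / γ)
      (fun j => by positivity) (fun t => by rw [← Finset.sum_div]; gcongr; exact hK t)
      fun j hj => ?_
    rw [le_div_iff₀ hγ, abs_mul, abs_sq, mul_pow, ← sq_abs (l j)]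
    have := mul_le_mul_of_nonneg_left (hout j hj) (mul_nonneg (abs_nonneg (l j)) (sq_nonneg (a j)))
    linarith
  have hnW : |n - ∑ j ∈ W, a j ^ 2| ≤ K / γ ^ 2 := by
    refine abs_sub_sum_le_of_hasSum hn W (y := fun j => (l j * a j) ^ 2 / γ ^ 2)
      (fun j => by positivity) (fun t => by rw [← Finset.sum_div]; gcongr; exact hK t)
      fun j hj => ?_
    rw [le_div_iff₀ (by positivity), abs_sq, mul_pow, ← sq_abs (l j), mul_comm]
    gcongr
    exact hout j hj
  have hWn : ∑ j ∈ W, a j ^ 2 ≤ n := sum_le_hasSum W (fun j _ => sq_nonneg _) hn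
  have h1 : -μ * (n - ∑ j ∈ W, a j ^ 2) ≤ γ * (n - ∑ j ∈ W, a j ^ 2) :=
    mul_le_mul_of_nonneg_right (neg_le.mp (abs_le.mp hμ).1) (sub_nonneg.mpr hWn)
  have h2 : γ * (n - ∑ j ∈ W, a j ^ 2) ≤ K / γ := by
    calc γ * (n - ∑ j ∈ W, a j ^ 2) ≤ γ * (K / γ ^ 2) := by gcongr; exact (abs_le.mp hnW).2
      _ = K / γ := by field_simp
  linear_combination (abs_le.mp hQW).2 + hW + h1 + h2

end Sums

theorem Orthonormal.sum_sq_apply_le {E ι : Type*} [NormedAddCommGroup E] [InnerProductSpace ℝ E]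
    {e : ι → E} (he : Orthonormal ℝ e) (ℓ : E →ₗ[ℝ] ℝ) {C : ℝ} (hC : ∀ w, |ℓ w| ≤ C * ‖w‖)
    (s : Finset ι) : ∑ j ∈ s, ℓ (e j) ^ 2 ≤ C ^ 2 := by
  set w := ∑ j ∈ s, ℓ (e j) • e j
  have hw : ‖w‖ ^ 2 = ∑ j ∈ s, ℓ (e j) ^ 2 := by
    rw [← real_inner_self_eq_norm_sq, he.inner_sum]
    simp [sq]
  have hℓw : ℓ w = ‖w‖ ^ 2 := by
    simp [w, hw, sq]
  have hwC : ‖w‖ ^ 2 ≤ C * ‖w‖ := hℓw ▸ (le_abs_self _).trans (hC w)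
  rw [← hw]
  nlinarith [sq_nonneg (C - ‖w‖), norm_nonneg w]

theorem OrthonormalBasis.mul_norm_sq_le_apply_self {E κ : Type*} [NormedAddCommGroup E]
    [InnerProductSpace ℝ E] [Fintype κ] (b : OrthonormalBasis κ ℝ E) (B : E →ₗ[ℝ] E →ₗ[ℝ] ℝ)
    {ξ : κ → ℝ} (hB : ∀ k w, B (b k) w = ξ k * ⟪b k, w⟫_ℝ) {ξ₀ : ℝ} {x : E}
    (hx : ∀ k, ⟪b k, x⟫_ℝ ≠ 0 → ξ₀ ≤ ξ k) : ξ₀ * ‖x‖ ^ 2 ≤ B x x := by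
  have hBx : B x x = ∑ k, ξ k * ⟪b k, x⟫_ℝ ^ 2 := by
    conv_lhs => arg 1; rw [← b.sum_repr' x]
    simp [hB, sq, mul_left_comm]
  rw [hBx, ← b.sum_sq_inner_right x]
  exact le_sum_mul_sq_of_ne_zero fun k _ => hx k

theorem Module.exists_ne_zero_forall_apply_eq_zero {K V κ : Type*} [Field K] [AddCommGroup V]
    [Module K V] [FiniteDimensional K V] [Fintype κ] (ℓ : κ → Module.Dual K V)
    (h : Fintype.card κ < Module.finrank K V) : ∃ v ≠ 0, ∀ k, ℓ k v = 0 := by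
  obtain ⟨v, hv, hv0⟩ := Submodule.exists_mem_ne_zero_of_ne_bot
    (LinearMap.ker_ne_bot_of_finrank_lt (f := LinearMap.pi ℓ) (by simpa using h))
  exact ⟨v, hv0, fun k => congrFun (LinearMap.mem_ker.mp hv) k⟩

section Window

variable {H : Type*} [NormedAddCommGroup H] [InnerProductSpace ℝ H] [CompleteSpace H]
  {D : Submodule ℝ H} {ι : Type*} {e : ι → D}

theorem hasSum_apply_mul_inner (he : Orthonormal ℝ (fun j => (e j : H)))
    (htot : (Submodule.span ℝ (Set.range fun j => (e j : H))).topologicalClosure = ⊤)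
    (ℓ : D →ₗ[ℝ] ℝ) {C : ℝ} (hC : ∀ w, |ℓ w| ≤ C * ‖w‖) (v : D) :
    HasSum (fun j => ℓ (e j) * ⟪(e j : H), v⟫_ℝ) (ℓ v) := by
  set b := HilbertBasis.mk he htot.ge
  have hv : HasSum (fun j => ⟪(e j : H), v⟫_ℝ • e j) v := by
    rw [← Topology.IsInducing.subtypeVal.hasSum_iff (g := D.subtype)]
    simpa [b, Function.comp_def, HilbertBasis.coe_mk, HilbertBasis.repr_apply_apply] using
      b.hasSum_repr v
  have hℓ : Continuous ℓ := AddMonoidHomClass.continuous_of_bound ℓ C fun w => by simpa using hC w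
  simpa [Function.comp_def, mul_comm] using hv.map ℓ hℓ

theorem rayleigh_le_of_window (q : D →ₗ[ℝ] D →ₗ[ℝ] ℝ) (hsymm : ∀ u v, q u v = q v u)
    (he : Orthonormal ℝ (fun j => (e j : H)))
    (htot : (Submodule.span ℝ (Set.range fun j => (e j : H))).topologicalClosure = ⊤)
    {l : ι → ℝ} (heig : ∀ j v, q (e j) v = l j * ⟪(e j : H), v⟫_ℝ)
    {W : Finset ι} {γ μ C : ℝ} (hγ : 0 < γ) (hout : ∀ j ∉ W, γ ≤ |l j|) (hμ : |μ| ≤ γ)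
    {u : D} (hC : ∀ w : D, |q u w| ≤ C * ‖(w : H)‖)
    (hW : ∀ j ∈ W, ⟪(e j : H), u⟫_ℝ ≠ 0 → l j ≤ μ) :
    q u u ≤ μ * ‖(u : H)‖ ^ 2 + 2 * C ^ 2 / γ := by
  have hqe : ∀ j, q u (e j) = l j * ⟪(e j : H), u⟫_ℝ := fun j => by rw [hsymm, heig]
  have hparseval : HasSum (fun j => ⟪(e j : H), u⟫_ℝ ^ 2) (‖(u : H)‖ ^ 2) := by
    simpa [HilbertBasis.coe_mk, real_inner_comm, ← sq] using
      (HilbertBasis.mk he htot.ge).hasSum_inner_mul_inner (u : H) u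
  refine le_mul_add_of_window ?_ hparseval (fun t => ?_) hγ hout hμ
    (sum_mul_sq_le_of_ne_zero hW)
  · simpa [hqe, mul_assoc, sq] using hasSum_apply_mul_inner he htot (q u) hC u
  · simpa [hqe] using (show Orthonormal ℝ e from he).sum_sq_apply_le (q u) hC t

theorem ritzValue_le_add_of_window (q : D →ₗ[ℝ] D →ₗ[ℝ] ℝ) (hsymm : ∀ u v, q u v = q v u)
    (he : Orthonormal ℝ (fun j => (e j : H)))
    (htot : (Submodule.span ℝ (Set.range fun j => (e j : H))).topologicalClosure = ⊤)
    {l : ι → ℝ} (heig : ∀ j v, q (e j) v = l j * ⟪(e j : H), v⟫_ℝ)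
    {W : Finset ι} {γ μ : ℝ} (hγ : 0 < γ) (hout : ∀ j ∉ W, γ ≤ |l j|) (hμ : |μ| ≤ γ)
    {F : Submodule ℝ D} {κ : Type*} [Fintype κ] (b : OrthonormalBasis κ ℝ F) {ξ : κ → ℝ}
    (hb : ∀ k (w : F), q (b k) w = ξ k * ⟪b k, w⟫_ℝ) {δ : ℝ}
    (hδ : ∀ (w : D) (φ : F), |q φ w| ≤ δ * ‖((φ : D) : H)‖ * ‖(w : H)‖) {ξ₀ : ℝ}
    (S : Finset κ) (T : Finset ι) (hcard : S.card + T.card < Fintype.card κ)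
    (hS : ∀ k ∉ S, ξ₀ ≤ ξ k) (hT : ∀ j ∈ W, j ∉ T → l j ≤ μ) :
    ξ₀ ≤ μ + 2 * δ ^ 2 / γ := by
  have := Module.Finite.of_basis b.toBasis
  obtain ⟨φ, hφ0, hφ⟩ := Module.exists_ne_zero_forall_apply_eq_zero
    (Sum.elim (fun k : S => innerₛₗ ℝ (b k))
      (fun j : T => (innerSL ℝ (e j : H)).toLinearMap ∘ₗ D.subtype ∘ₗ F.subtype))
    (by simpa [Module.finrank_eq_card_basis b.toBasis] using hcard)
  have hbφ : ∀ k ∈ S, ⟪b k, φ⟫_ℝ = 0 := fun k hk => hφ (.inl ⟨k, hk⟩)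
  have heφ : ∀ j ∈ T, ⟪(e j : H), φ⟫_ℝ = 0 := fun j hj => hφ (.inr ⟨j, hj⟩)
  have hφpos : 0 < ‖((φ : D) : H)‖ ^ 2 := by
    have : ((φ : D) : H) ≠ 0 := by simpa using hφ0
    positivity
  have hlower : ξ₀ * ‖((φ : D) : H)‖ ^ 2 ≤ q φ φ :=
    b.mul_norm_sq_le_apply_self (q.compl₁₂ F.subtype F.subtype) hb
      fun k hk => hS k fun hkS => hk (hbφ k hkS)
  have hupper := rayleigh_le_of_window q hsymm he htot heig hγ hout hμ
    (C := δ * ‖((φ : D) : H)‖) (u := φ) (fun w => by simpa [mul_comm] using hδ w φ)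
    fun j hj hne => hT j hj fun hjT => hne (heφ j hjT)
  refine le_of_mul_le_mul_right ?_ hφpos
  calc ξ₀ * ‖((φ : D) : H)‖ ^ 2 ≤ μ * ‖((φ : D) : H)‖ ^ 2 + 2 * (δ * ‖((φ : D) : H)‖) ^ 2 / γ :=
        hlower.trans hupper
    _ = (μ + 2 * δ ^ 2 / γ) * ‖((φ : D) : H)‖ ^ 2 := by ring

theorem le_ritzValue_add_of_window (q : D →ₗ[ℝ] D →ₗ[ℝ] ℝ) (hsymm : ∀ u v, q u v = q v u)
    (he : Orthonormal ℝ (fun j => (e j : H)))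
    (htot : (Submodule.span ℝ (Set.range fun j => (e j : H))).topologicalClosure = ⊤)
    {l : ι → ℝ} (heig : ∀ j v, q (e j) v = l j * ⟪(e j : H), v⟫_ℝ)
    {W : Finset ι} {γ μ : ℝ} (hγ : 0 < γ) (hout : ∀ j ∉ W, γ ≤ |l j|) (hμ : |μ| ≤ γ)
    {F : Submodule ℝ D} {κ : Type*} [Fintype κ] (b : OrthonormalBasis κ ℝ F) {ξ : κ → ℝ}
    (hb : ∀ k (w : F), q (b k) w = ξ k * ⟪b k, w⟫_ℝ) {δ : ℝ}
    (hδ : ∀ (w : D) (φ : F), |q φ w| ≤ δ * ‖((φ : D) : H)‖ * ‖(w : H)‖) {ξ₀ : ℝ}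
    (S : Finset κ) (T : Finset ι) (hcard : S.card + T.card < Fintype.card κ)
    (hS : ∀ k ∉ S, ξ k ≤ ξ₀) (hT : ∀ j ∈ W, j ∉ T → μ ≤ l j) :
    μ ≤ ξ₀ + 2 * δ ^ 2 / γ := by
  have := ritzValue_le_add_of_window (-q) (fun u v => by simp [hsymm u v]) he htot (l := -l)
    (fun j v => by simp [heig]) hγ (fun j hj => by simpa using hout j hj) (μ := -μ)
    (by simpa using hμ) b (ξ := -ξ) (fun k w => by simp [hb]) (fun w φ => by simpa using hδ w φ)
    (ξ₀ := -ξ₀) S T hcard (fun k hk => by simpa using hS k hk)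
    fun j hj hjT => by simpa using hT j hj hjT
  linarith

end Window

theorem stmt0_general
    {H : Type*} [NormedAddCommGroup H] [InnerProductSpace ℝ H] [CompleteSpace H]
    (D : Submodule ℝ H)
    (q : D →ₗ[ℝ] D →ₗ[ℝ] ℝ)
    (hsymm : ∀ u v : D, q u v = q v u)
    (ν : ℕ → ℝ) (hν : ∀ i j : ℕ, 1 ≤ i → i ≤ j → ν i ≤ ν j)
    (g : ℕ → D)
    (hg_orth : Orthonormal ℝ (fun i : ℕ => ((g (i + 1) : H))))
    (hg_tot :
      (Submodule.span ℝ (Set.range (fun i : ℕ => ((g (i + 1) : H))))).topologicalClosure = ⊤)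
    (hg_eig : ∀ i : ℕ, 1 ≤ i → ∀ v : D,
      q (g i) v = ν i * (inner ℝ ((g i : H)) ((v : H)) : ℝ))
    (N m : ℕ) (hN : 1 ≤ N)
    (F : Submodule ℝ D)
    (ξ : ℕ → ℝ) (hξ : ∀ i j : ℕ, 1 ≤ i → i ≤ j → j ≤ m → ξ i ≤ ξ j)
    (f : ℕ → F)
    (hf_orth : Orthonormal ℝ (fun i : Fin m => (((f ((i : ℕ) + 1) : D) : H))))
    (hf_span : Submodule.span ℝ (Set.range (fun i : Fin m => f ((i : ℕ) + 1)))
      = (⊤ : Submodule ℝ F))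
    (hf_eig : ∀ i : ℕ, 1 ≤ i → i ≤ m → ∀ w : F,
      q (f i : D) (w : D) = ξ i * (inner ℝ (((f i : D) : H)) (((w : D) : H)) : ℝ))
    (γ δ : ℝ) (hγ : 0 < γ)
    (hH2a : ∀ i : ℕ, 1 ≤ i → i ≤ m → |ν (N + i - 1)| ≤ γ)
    (hH2b : γ ≤ ν (N + m))
    (hH2c : 2 ≤ N → ν (N - 1) ≤ -γ)
    (hH3 : ∀ (w : D) (φ : F), |q (φ : D) w| ≤ δ * ‖((φ : D) : H)‖ * ‖(w : H)‖) :
    ∀ i : ℕ, 1 ≤ i → i ≤ m → |ν (N + i - 1) - ξ i| ≤ 4 * δ ^ 2 / γ := by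
  intro i hi him
  -- `j` indexes `g (j + 1)`, so the window `Ico (N - 1) (N + m - 1)` is `g_N, …, g_{N+m-1}`.
  have hout : ∀ j ∉ Finset.Ico (N - 1) (N + m - 1), γ ≤ |ν (j + 1)| := by
    intro j hj
    rw [Finset.mem_Ico, not_and_or, not_le, not_lt] at hj
    rcases hj with hj | hj
    · have := hν (j + 1) (N - 1) (by omega) (by omega)
      exact le_abs.mpr (.inr (by linarith [hH2c (by omega)]))
    · exact le_abs.mpr (.inl (hH2b.trans (hν _ _ (by omega) (by omega))))
  let b : OrthonormalBasis (Fin m) ℝ F :=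
    OrthonormalBasis.mk (v := fun k => f (k + 1)) hf_orth hf_span.ge
  have hb (k : Fin m) (w : F) : q (b k) w = ξ (k + 1) * ⟪b k, w⟫_ℝ := by
    rw [show b k = f (k + 1) from congrFun (OrthonormalBasis.coe_mk _ _) k]
    exact hf_eig (k + 1) (by omega) k.2 w
  have hge (j : ℕ) (v : D) := hg_eig (j + 1) (by omega) v
  have hupper : ξ i ≤ ν (N + i - 1) + 2 * δ ^ 2 / γ :=
    ritzValue_le_add_of_window q hsymm hg_orth hg_tot hge hγ hout (hH2a i hi him) b hb hH3
      (Finset.Iio ⟨i - 1, by omega⟩) (Finset.Ico (N + i - 1) (N + m - 1)) (by simp; omega)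
      (fun k hk => hξ _ _ hi (by simp [Fin.lt_def] at hk; omega) k.2)
      fun j hj hjT => hν _ _ (by omega) (by simp at hj hjT; omega)
  have hlower : ν (N + i - 1) ≤ ξ i + 2 * δ ^ 2 / γ :=
    le_ritzValue_add_of_window q hsymm hg_orth hg_tot hge hγ hout (hH2a i hi him) b hb hH3
      (Finset.Ioi ⟨i - 1, by omega⟩) (Finset.Ico (N - 1) (N + i - 2)) (by simp; omega)
      (fun k hk => hξ _ _ (by omega) (by simp [Fin.lt_def] at hk; omega) him)
      fun j hj hjT => hν _ _ (by omega) (by simp at hj hjT; omega)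
  have h24 : 2 * δ ^ 2 / γ ≤ 4 * δ ^ 2 / γ := by gcongr; norm_num
  rw [abs_le]
  constructor <;> linarith

/-- Abstract eigenvalue-approximation lemma (Proposition 3.4(i)): in a real Hilbert space
`H`, let `q` be a symmetric, semibounded bilinear form on a dense subspace `D` admitting a
nondecreasing sequence of eigenvalues `ν_i` (`i ≥ 1`) with eigenvectors `g_i ∈ D` forming
an orthonormal Hilbert basis of `H`. Let `F ⊆ D` be an `m`-dimensional subspace on which
`q` has eigenvalues `ξ_1 ≤ … ≤ ξ_m` (with respect to an orthonormal basis of `F`). If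
`0 < δ < γ/√2`, `|ν_{N+i−1}| ≤ γ` for `i = 1, …, m`, `ν_{N+m} ≥ γ`, `ν_{N−1} ≤ −γ` when
`N ≥ 2`, and `|q(φ, g)| ≤ δ‖φ‖‖g‖` for all `φ ∈ F`, `g ∈ D`, then
`|ν_{N+i−1} − ξ_i| ≤ 4δ²/γ` for every `i = 1, …, m`. -/
theorem stmt0
    {H : Type*} [NormedAddCommGroup H] [InnerProductSpace ℝ H] [CompleteSpace H]
    (D : Submodule ℝ H) (hdense : Dense (D : Set H))
    (q : D →ₗ[ℝ] D →ₗ[ℝ] ℝ)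
    (hsymm : ∀ u v : D, q u v = q v u)
    (hsb : ∃ c : ℝ, ∀ u : D, c * ‖(u : H)‖ ^ 2 ≤ q u u)
    (ν : ℕ → ℝ) (hν : ∀ i j : ℕ, 1 ≤ i → i ≤ j → ν i ≤ ν j)
    (g : ℕ → D)
    (hg_orth : Orthonormal ℝ (fun i : ℕ => ((g (i + 1) : H))))
    (hg_tot :
      (Submodule.span ℝ (Set.range (fun i : ℕ => ((g (i + 1) : H))))).topologicalClosure = ⊤)
    (hg_eig : ∀ i : ℕ, 1 ≤ i → ∀ v : D,
      q (g i) v = ν i * (inner ℝ ((g i : H)) ((v : H)) : ℝ))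
    (N m : ℕ) (hN : 1 ≤ N) (hm : 1 ≤ m)
    (F : Submodule ℝ D) (hdim : Module.finrank ℝ F = m)
    (ξ : ℕ → ℝ) (hξ : ∀ i j : ℕ, 1 ≤ i → i ≤ j → j ≤ m → ξ i ≤ ξ j)
    (f : ℕ → F)
    (hf_orth : Orthonormal ℝ (fun i : Fin m => (((f ((i : ℕ) + 1) : D) : H))))
    (hf_span : Submodule.span ℝ (Set.range (fun i : Fin m => f ((i : ℕ) + 1)))
      = (⊤ : Submodule ℝ F))
    (hf_eig : ∀ i : ℕ, 1 ≤ i → i ≤ m → ∀ w : F,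
      q (f i : D) (w : D) = ξ i * (inner ℝ (((f i : D) : H)) (((w : D) : H)) : ℝ))
    (γ δ : ℝ) (hγ : 0 < γ) (hδ : 0 < δ) (hδγ : δ < γ / Real.sqrt 2)
    (hH2a : ∀ i : ℕ, 1 ≤ i → i ≤ m → |ν (N + i - 1)| ≤ γ)
    (hH2b : γ ≤ ν (N + m))
    (hH2c : 2 ≤ N → ν (N - 1) ≤ -γ)
    (hH3 : ∀ (w : D) (φ : F), |q (φ : D) w| ≤ δ * ‖((φ : D) : H)‖ * ‖(w : H)‖) :
    ∀ i : ℕ, 1 ≤ i → i ≤ m → |ν (N + i - 1) - ξ i| ≤ 4 * δ ^ 2 / γ :=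
  stmt0_general D q hsymm ν hν g hg_orth hg_tot hg_eig N m hN F ξ hξ f hf_orth hf_span hf_eig γ δ hγ
    hH2a hH2b hH2c hH3
end

section
/- Let (H, ⟨·,·⟩) be a real Hilbert space with norm ‖·‖ and let D ⊆ H be a dense linear subspace. Let q : D × D → ℝ be a symmetric bilinear form such that: (a) q is semi-bounded from below, i.e. there exists c ∈ ℝ with q(u,u) ≥ c‖u‖² for all u ∈ D; (b) there exist a nondecreasing sequence of real numbers (ν_i)_{i≥1} and an orthonormal Hilbert basis (g_i)_{i≥1} of H with g_i ∈ D and q(g_i, v) = ν_i ⟨g_i, v⟩ for all i ≥ 1 and all v ∈ D. Let N ≥ 1 and m ≥ 1 be integers and let F ⊆ D be an m-dimensional linear subspace. Assume there exist positive constants γ and δ such that: (H1) 0 < δ < γ/√2; (H2) |ν_{N+i−1}| ≤ γ for all i ∈ {1,…,m}, ν_{N+m} ≥ γ, and, if N ≥ 2, ν_{N−1} ≤ −γ; (H3) |q(φ, g)| ≤ δ ‖φ‖ ‖g‖ for all g ∈ D and all φ ∈ F. Let Π_N denote the orthogonal projection of H onto the closed subspace spanned by {g_N, …, g_{N+m−1}}.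 Then ‖Π_N φ − φ‖ ≤ (√2 δ/γ) ‖φ‖ for every φ ∈ F. -/
/-!
Write `x = φ - Π_N φ` in the Hilbert basis `(g_i)`: its coefficients vanish in the window
`N ≤ i < N + m` and equal `⟪g_i, φ⟫` outside it, where `|ν_i| ≥ γ`. Testing (H3) against
`w = ∑_{i ∈ s} ν_i ⟪g_i, φ⟫ g_i` for a finite set `s` gives `q(w, φ) = ‖w‖²`, hence
`∑ ν_i² ⟪g_i, φ⟫² ≤ δ² ‖φ‖²`. Comparing coefficients then yields `γ ‖x‖ ≤ δ ‖φ‖`.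
-/

open scoped InnerProductSpace

section

variable {H : Type*} [NormedAddCommGroup H] [InnerProductSpace ℝ H]

theorem HilbertBasis.sq_norm_le_tsum {ι : Type*} (b : HilbertBasis ι ℝ H) (x : H) {f : ι → ℝ}
    (hf : Summable f) (h : ∀ i, ⟪b i, x⟫_ℝ ^ 2 ≤ f i) : ‖x‖ ^ 2 ≤ ∑' i, f i := by
  have hx : HasSum (fun i => ⟪b i, x⟫_ℝ ^ 2) (‖x‖ ^ 2) := by
    simpa only [real_inner_comm x, ← sq, real_inner_self_eq_norm_sq] using
      b.hasSum_inner_mul_inner x x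
  exact hasSum_le h hx hf.hasSum

theorem sum_sq_eigenvalue_mul_inner_le {D : Submodule ℝ H} {ι : Type*}
    (q : D →ₗ[ℝ] D →ₗ[ℝ] ℝ) {u : ι → D} (hu : Orthonormal ℝ fun i => (u i : H)) {μ : ι → ℝ}
    (heig : ∀ i v, q (u i) v = μ i * ⟪(u i : H), v⟫_ℝ) {x : D} {C : ℝ}
    (hx : ∀ w, |q w x| ≤ C * ‖(w : H)‖) (s : Finset ι) :
    ∑ i ∈ s, (μ i * ⟪(u i : H), x⟫_ℝ) ^ 2 ≤ C ^ 2 := by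
  set c : ι → ℝ := fun i => μ i * ⟪(u i : H), x⟫_ℝ
  set w : D := ∑ i ∈ s, c i • u i
  have hqw : q w x = ∑ i ∈ s, c i ^ 2 := by
    simp [w, c, map_sum, heig, sq]
  have hw : ‖(w : H)‖ ^ 2 = ∑ i ∈ s, c i ^ 2 := by
    rw [← real_inner_self_eq_norm_sq]
    push_cast [w]
    rw [hu.inner_sum]
    simp [sq]
  have hbound := hx w
  rw [hqw, ← hw] at hbound
  nlinarith [le_abs_self (‖(w : H)‖ ^ 2), norm_nonneg (w : H), sq_nonneg (C - ‖(w : H)‖)]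

theorem inner_eq_zero_of_notMem_Ico_of_mem_span {g : ℕ → H} (hg : Orthonormal ℝ fun i => g (i + 1))
    {N m i : ℕ} (hN : 1 ≤ N) (hi : i + 1 ∉ Set.Ico N (N + m)) {p : H}
    (hp : p ∈ Submodule.span ℝ (Set.range fun j : Fin m => g (N + j))) :
    ⟪g (i + 1), p⟫_ℝ = 0 := by
  refine Submodule.mem_orthogonal_singleton_iff_inner_right.1 (Submodule.span_le.2 ?_ hp)
  rintro _ ⟨j, rfl⟩
  rw [Set.mem_Ico] at hi
  dsimp only
  rw [SetLike.mem_coe, Submodule.mem_orthogonal_singleton_iff_inner_right,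
    show N + (j : ℕ) = N + j - 1 + 1 by omega]
  exact hg.2 (by omega)

theorem le_abs_of_notMem_Ico {ν : ℕ → ℝ} (hν : ∀ i j : ℕ, 1 ≤ i → i ≤ j → ν i ≤ ν j)
    {N m : ℕ} (hN : 1 ≤ N) {γ : ℝ} (hup : γ ≤ ν (N + m)) (hlow : 2 ≤ N → ν (N - 1) ≤ -γ) {j : ℕ}
    (hj : 1 ≤ j) (hwin : j ∉ Set.Ico N (N + m)) : γ ≤ |ν j| := by
  rw [Set.mem_Ico, not_and_or, not_le, not_lt] at hwin
  rcases hwin with hbelow | habove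
  · linarith [hν j (N - 1) hj (by omega), hlow (by omega), neg_abs_le (ν j)]
  · linarith [hν (N + m) j (by omega) habove, le_abs_self (ν j)]

theorem sq_mul_sq_inner_sub_le {g : ℕ → H} (hg : Orthonormal ℝ fun i => g (i + 1))
    {ν : ℕ → ℝ} (hν : ∀ i j : ℕ, 1 ≤ i → i ≤ j → ν i ≤ ν j) {N m : ℕ} (hN : 1 ≤ N) {γ : ℝ}
    (hγ : 0 < γ) (hup : γ ≤ ν (N + m)) (hlow : 2 ≤ N → ν (N - 1) ≤ -γ) {x p : H}
    (hp : p ∈ Submodule.span ℝ (Set.range fun j : Fin m => g (N + j)))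
    (hperp : ∀ y ∈ Submodule.span ℝ (Set.range fun j : Fin m => g (N + j)), ⟪x - p, y⟫_ℝ = 0)
    (i : ℕ) : γ ^ 2 * ⟪g (i + 1), x - p⟫_ℝ ^ 2 ≤ (ν (i + 1) * ⟪g (i + 1), x⟫_ℝ) ^ 2 := by
  by_cases hi : i + 1 ∈ Set.Ico N (N + m)
  · rw [Set.mem_Ico] at hi
    have hmem : g (i + 1) ∈ Submodule.span ℝ (Set.range fun j : Fin m => g (N + j)) := by
      refine Submodule.subset_span ⟨⟨i + 1 - N, by omega⟩, ?_⟩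
      dsimp only
      congr 1
      omega
    rw [real_inner_comm, hperp _ hmem, zero_pow two_ne_zero, mul_zero]
    exact sq_nonneg _
  · have hgap : γ ≤ |ν (i + 1)| := le_abs_of_notMem_Ico hν hN hup hlow (by omega) hi
    have hgap_sq : γ ^ 2 ≤ ν (i + 1) ^ 2 := sq_abs (ν (i + 1)) ▸ pow_le_pow_left₀ hγ.le hgap 2
    rw [inner_sub_right, inner_eq_zero_of_notMem_Ico_of_mem_span hg hN hi hp, sub_zero, mul_pow]
    exact mul_le_mul_of_nonneg_right hgap_sq (sq_nonneg _)

end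

theorem stmt1_general
    {H : Type*} [NormedAddCommGroup H] [InnerProductSpace ℝ H] [CompleteSpace H]
    (D : Submodule ℝ H)
    (q : D →ₗ[ℝ] D →ₗ[ℝ] ℝ)
    (hsymm : ∀ u v : D, q u v = q v u)
    (ν : ℕ → ℝ) (hν : ∀ i j : ℕ, 1 ≤ i → i ≤ j → ν i ≤ ν j)
    (g : ℕ → D)
    (hg_orth : Orthonormal ℝ (fun i : ℕ => ((g (i + 1) : H))))
    (hg_tot :
      (Submodule.span ℝ (Set.range (fun i : ℕ => ((g (i + 1) : H))))).topologicalClosure = ⊤)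
    (hg_eig : ∀ i : ℕ, 1 ≤ i → ∀ v : D,
      q (g i) v = ν i * (inner ℝ ((g i : H)) ((v : H)) : ℝ))
    (N m : ℕ) (hN : 1 ≤ N)
    (F : Submodule ℝ D)
    (γ δ : ℝ) (hγ : 0 < γ) (hδ : 0 < δ)
    (hH2b : γ ≤ ν (N + m))
    (hH2c : 2 ≤ N → ν (N - 1) ≤ -γ)
    (hH3 : ∀ (w : D) (φ : F), |q (φ : D) w| ≤ δ * ‖((φ : D) : H)‖ * ‖(w : H)‖) :
    ∀ φ : F, ∀ p : H,
      p ∈ Submodule.span ℝ (Set.range (fun i : Fin m => ((g (N + (i : ℕ)) : H)))) →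
      (∀ y ∈ Submodule.span ℝ (Set.range (fun i : Fin m => ((g (N + (i : ℕ)) : H)))),
        (inner ℝ (((φ : D) : H) - p) y : ℝ) = 0) →
      ‖p - ((φ : D) : H)‖ ≤ Real.sqrt 2 * δ / γ * ‖((φ : D) : H)‖ := by
  intro φ p hp hperp
  set x : H := ((φ : D) : H)
  let b : HilbertBasis ℕ ℝ H := HilbertBasis.mk hg_orth hg_tot.ge
  set f : ℕ → ℝ := fun i => (ν (i + 1) * ⟪(g (i + 1) : H), x⟫_ℝ) ^ 2
  have hf : ∀ s, ∑ i ∈ s, f i ≤ (δ * ‖x‖) ^ 2 :=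
    sum_sq_eigenvalue_mul_inner_le q hg_orth (fun i => hg_eig (i + 1) (by omega))
      (fun w => hsymm w φ ▸ hH3 w φ)
  have hf_summable : Summable f := summable_of_sum_le (fun _ => sq_nonneg _) hf
  have hcoef : ∀ i, ⟪b i, x - p⟫_ℝ ^ 2 ≤ f i / γ ^ 2 := fun i => by
    rw [HilbertBasis.coe_mk, le_div_iff₀ (by positivity), mul_comm]
    exact sq_mul_sq_inner_sub_le (g := fun n => (g n : H)) hg_orth hν hN hγ hH2b hH2c hp hperp i
  have hsq : ‖x - p‖ ^ 2 ≤ (δ / γ * ‖x‖) ^ 2 :=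
    calc ‖x - p‖ ^ 2 ≤ ∑' i, f i / γ ^ 2 := b.sq_norm_le_tsum _ (hf_summable.div_const _) hcoef
      _ = (∑' i, f i) / γ ^ 2 := tsum_div_const
      _ ≤ (δ * ‖x‖) ^ 2 / γ ^ 2 := by gcongr; exact hf_summable.tsum_le_of_sum_le hf
      _ = (δ / γ * ‖x‖) ^ 2 := by ring
  rw [norm_sub_rev]
  calc ‖x - p‖ ≤ δ / γ * ‖x‖ := le_of_pow_le_pow_left₀ two_ne_zero (by positivity) hsq
    _ ≤ Real.sqrt 2 * δ / γ * ‖x‖ := by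
      rw [mul_div_assoc, mul_assoc]
      exact le_mul_of_one_le_left (by positivity) (Real.one_le_sqrt.2 one_le_two)

/-- Abstract eigenvalue-approximation lemma (Proposition 3.4(ii)): under the same
assumptions as in Proposition 3.4(i), the orthogonal projection `Π_N` of `H` onto the
subspace spanned by `g_N, …, g_{N+m−1}` (characterized by `Π_N φ ∈ K` and
`φ − Π_N φ ⟂ K`) satisfies `‖Π_N φ − φ‖ ≤ (√2 δ/γ)‖φ‖` for every `φ ∈ F`. -/
theorem stmt1
    {H : Type*} [NormedAddCommGroup H] [InnerProductSpace ℝ H] [CompleteSpace H]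
    (D : Submodule ℝ H) (hdense : Dense (D : Set H))
    (q : D →ₗ[ℝ] D →ₗ[ℝ] ℝ)
    (hsymm : ∀ u v : D, q u v = q v u)
    (hsb : ∃ c : ℝ, ∀ u : D, c * ‖(u : H)‖ ^ 2 ≤ q u u)
    (ν : ℕ → ℝ) (hν : ∀ i j : ℕ, 1 ≤ i → i ≤ j → ν i ≤ ν j)
    (g : ℕ → D)
    (hg_orth : Orthonormal ℝ (fun i : ℕ => ((g (i + 1) : H))))
    (hg_tot :
      (Submodule.span ℝ (Set.range (fun i : ℕ => ((g (i + 1) : H))))).topologicalClosure = ⊤)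
    (hg_eig : ∀ i : ℕ, 1 ≤ i → ∀ v : D,
      q (g i) v = ν i * (inner ℝ ((g i : H)) ((v : H)) : ℝ))
    (N m : ℕ) (hN : 1 ≤ N) (hm : 1 ≤ m)
    (F : Submodule ℝ D) (hdim : Module.finrank ℝ F = m)
    (γ δ : ℝ) (hγ : 0 < γ) (hδ : 0 < δ) (hδγ : δ < γ / Real.sqrt 2)
    (hH2a : ∀ i : ℕ, 1 ≤ i → i ≤ m → |ν (N + i - 1)| ≤ γ)
    (hH2b : γ ≤ ν (N + m))
    (hH2c : 2 ≤ N → ν (N - 1) ≤ -γ)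
    (hH3 : ∀ (w : D) (φ : F), |q (φ : D) w| ≤ δ * ‖((φ : D) : H)‖ * ‖(w : H)‖) :
    ∀ φ : F, ∀ p : H,
      p ∈ Submodule.span ℝ (Set.range (fun i : Fin m => ((g (N + (i : ℕ)) : H)))) →
      (∀ y ∈ Submodule.span ℝ (Set.range (fun i : Fin m => ((g (N + (i : ℕ)) : H)))),
        (inner ℝ (((φ : D) : H) - p) y : ℝ) = 0) →
      ‖p - ((φ : D) : H)‖ ≤ Real.sqrt 2 * δ / γ * ‖((φ : D) : H)‖ :=
  stmt1_general D q hsymm ν hν g hg_orth hg_tot hg_eig N m hN F γ δ hγ hδ hH2b hH2c hH3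
end

section
/- Let E be a nonzero finite-dimensional real inner product space and let k : E ∖ {0} → ℕ be a function taking only odd values, with the property that for every odd natural number n the set N(n) := {0} ∪ {u ∈ E ∖ {0} : k(u) ≥ n} is a linear subspace of E. Then there exist an integer p ≥ 1, odd natural numbers k_1 < k_2 < … < k_p, and nonzero pairwise orthogonal linear subspaces E_1, …, E_p of E such that E is the (internal, orthogonal) direct sum E = E_1 ⊕ … ⊕ E_p and k(u) = k_ℓ for every ℓ ∈ {1,…,p} and every u ∈ E_ℓ ∖ {0}. -/
/-!
Write `S n` for the subspace `{0} ∪ {k ≥ n}`. Because `k` only takes odd values, this is a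
subspace for every `n`, not just odd ones, so `S 0 ⊇ S 1 ⊇ ⋯` is a decreasing filtration of
`E` by subspaces. Its orthogonal graded pieces `S (n + 1)ᗮ ⊓ S n` are pairwise orthogonal,
`k ≡ n` on the nonzero vectors of the `n`-th piece, and a vector orthogonal to all pieces lies
in every `S n`, hence is `0`. Finite dimension leaves only finitely many nonzero pieces;
listing them in increasing order of `n` gives the decomposition.
-/

open Submodule

theorem exists_submodule_forall_mem_iff_of_odd {R M : Type*} [Semiring R] [AddCommMonoid M]
    [Module R M] (k : M → ℕ) (hodd : ∀ u : M, u ≠ 0 → Odd (k u))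
    (hsub : ∀ n : ℕ, Odd n →
      ∃ S : Submodule R M, (S : Set M) = {0} ∪ {u : M | u ≠ 0 ∧ n ≤ k u}) (n : ℕ) :
    ∃ S : Submodule R M, ∀ u, u ∈ S ↔ u = 0 ∨ n ≤ k u := by
  obtain ⟨m, hm, hmn⟩ : ∃ m, Odd m ∧ ∀ u : M, u ≠ 0 → (m ≤ k u ↔ n ≤ k u) := by
    rcases Nat.even_or_odd n with hn | hn
    · refine ⟨n + 1, hn.add_one, fun u hu => ⟨Nat.le_of_succ_le, fun h => ?_⟩⟩
      have : k u ≠ n := fun h' => Nat.not_even_iff_odd.2 (hodd u hu) (h' ▸ hn)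
      omega
    · exact ⟨n, hn, fun _ _ => Iff.rfl⟩
  obtain ⟨S, hS⟩ := hsub m hm
  refine ⟨S, fun u => ?_⟩
  rw [← SetLike.mem_coe, hS]
  by_cases hu : u = 0 <;> simp [hu, hmn]

section Filtration

variable {𝕜 E : Type*} [RCLike 𝕜] [NormedAddCommGroup E] [InnerProductSpace 𝕜 E]

theorem Submodule.mem_of_mem_orthogonal_orthogonal_inf {K₁ K₂ : Submodule 𝕜 E}
    [K₁.HasOrthogonalProjection] (h : K₁ ≤ K₂) {u : E} (hu₂ : u ∈ K₂)
    (hu : u ∈ (K₁ᗮ ⊓ K₂)ᗮ) : u ∈ K₁ := by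
  rw [← sup_orthogonal_inf_of_hasOrthogonalProjection h, mem_sup] at hu₂
  obtain ⟨s, hs, e, he, rfl⟩ := hu₂
  have hse : inner 𝕜 s e = 0 := inner_right_of_mem_orthogonal hs he.1
  have hue : inner 𝕜 (s + e) e = 0 := inner_left_of_mem_orthogonal he hu
  rw [inner_add_left, hse, zero_add, inner_self_eq_zero] at hue
  simpa [hue] using hs

def gradedPiece (S : ℕ → Submodule 𝕜 E) (n : ℕ) : Submodule 𝕜 E :=
  (S (n + 1))ᗮ ⊓ S n

variable {S : ℕ → Submodule 𝕜 E} {k : E → ℕ}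

theorem antitone_of_forall_mem_iff (hS : ∀ n u, u ∈ S n ↔ u = 0 ∨ n ≤ k u) : Antitone S :=
  antitone_nat_of_succ_le fun n u hu => by
    rw [hS] at hu ⊢
    exact hu.imp_right Nat.le_of_succ_le

theorem eq_of_mem_gradedPiece (hS : ∀ n u, u ∈ S n ↔ u = 0 ∨ n ≤ k u) {n : ℕ} {u : E}
    (hu : u ∈ gradedPiece S n) (hu0 : u ≠ 0) : k u = n := by
  have hle : n ≤ k u := ((hS n u).1 hu.2).resolve_left hu0
  by_contra hne
  have hsucc : u ∈ S (n + 1) := (hS _ u).2 (Or.inr (by omega))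
  exact hu0 (inner_self_eq_zero.1 (inner_right_of_mem_orthogonal hsucc hu.1))

theorem gradedPiece_isOrtho_of_lt (hS : Antitone S) {m n : ℕ} (h : m < n) :
    gradedPiece S m ⟂ gradedPiece S n :=
  (isOrtho_orthogonal_left (S (m + 1))).mono inf_le_left (inf_le_right.trans (hS h))

theorem pairwise_isOrtho_gradedPiece (hS : Antitone S) :
    Pairwise fun m n => gradedPiece S m ⟂ gradedPiece S n := by
  intro m n hmn
  rcases lt_or_gt_of_ne hmn with h | h
  · exact gradedPiece_isOrtho_of_lt hS h
  · exact (gradedPiece_isOrtho_of_lt hS h).symm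

theorem finite_setOf_gradedPiece_ne_bot [FiniteDimensional 𝕜 E] (hS : Antitone S) :
    {n | gradedPiece S n ≠ ⊥}.Finite :=
  Set.finite_coe_iff.1 <| @Finite.of_fintype _ <|
    (OrthogonalFamily.of_pairwise (pairwise_isOrtho_gradedPiece hS)).independent
      |>.fintypeNeBotOfFiniteDimensional

theorem iSup_gradedPiece_eq_top [FiniteDimensional 𝕜 E]
    (hS : ∀ n u, u ∈ S n ↔ u = 0 ∨ n ≤ k u) : ⨆ n, gradedPiece S n = ⊤ := by
  rw [← orthogonal_eq_bot_iff, eq_bot_iff]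
  intro u hu
  by_contra hu0
  have hmem : ∀ n, u ∈ S n → u ∈ S (n + 1) := fun n hn =>
    mem_of_mem_orthogonal_orthogonal_inf (antitone_of_forall_mem_iff hS n.le_succ) hn
      (orthogonal_le (le_iSup (gradedPiece S) n) hu)
  have hall : ∀ n, u ∈ S n := fun n => Nat.rec ((hS 0 u).2 (Or.inr (Nat.zero_le _))) hmem n
  have := ((hS _ u).1 (hall (k u + 1))).resolve_left hu0
  omega

end Filtration

/-- Structural core of Proposition 5.1: if `k` assigns odd natural numbers to nonzero
vectors of a nonzero finite-dimensional real inner product space `E`, and for every odd `n`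
the set `{0} ∪ {u ≠ 0 : k(u) ≥ n}` is a linear subspace, then `E` decomposes as an
orthogonal direct sum `E = E₁ ⊕ ⋯ ⊕ E_p` of nonzero subspaces with `k ≡ k_ℓ` on
`E_ℓ ∖ {0}` for strictly increasing odd numbers `k₁ < ⋯ < k_p`. -/
theorem stmt2 {E : Type*} [NormedAddCommGroup E] [InnerProductSpace ℝ E]
    [FiniteDimensional ℝ E] [Nontrivial E]
    (k : E → ℕ) (hodd : ∀ u : E, u ≠ 0 → Odd (k u))
    (hsub : ∀ n : ℕ, Odd n →
      ∃ S : Submodule ℝ E, (S : Set E) = {0} ∪ {u : E | u ≠ 0 ∧ n ≤ k u}) :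
    ∃ (p : ℕ) (ks : Fin p → ℕ) (Es : Fin p → Submodule ℝ E),
      1 ≤ p ∧
      StrictMono ks ∧ (∀ ℓ : Fin p, Odd (ks ℓ)) ∧ (∀ ℓ : Fin p, Es ℓ ≠ ⊥) ∧
      (∀ i j : Fin p, i ≠ j → ∀ u ∈ Es i, ∀ v ∈ Es j, (inner ℝ u v : ℝ) = 0) ∧
      (⨆ ℓ : Fin p, Es ℓ) = ⊤ ∧
      (∀ ℓ : Fin p, ∀ u ∈ Es ℓ, u ≠ 0 → k u = ks ℓ) := by
  choose S hS using exists_submodule_forall_mem_iff_of_odd (R := ℝ) k hodd hsub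
  have hanti := antitone_of_forall_mem_iff hS
  have htop := iSup_gradedPiece_eq_top hS
  set V := (finite_setOf_gradedPiece_ne_bot hanti).toFinset
  set ks := V.orderEmbOfFin rfl
  have hks : ∀ ℓ, gradedPiece S (ks ℓ) ≠ ⊥ := fun ℓ =>
    (Set.Finite.mem_toFinset _).1 (V.orderEmbOfFin_mem rfl ℓ)
  refine ⟨V.card, ks, fun ℓ => gradedPiece S (ks ℓ), ?_, ks.strictMono, fun ℓ => ?_, hks,
    fun i j hij _ hu _ hv =>
      (pairwise_isOrtho_gradedPiece hanti (ks.injective.ne hij)).inner_eq hu hv,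
    ?_, fun ℓ _ hu hu0 => eq_of_mem_gradedPiece hS hu hu0⟩
  · obtain ⟨n, hn⟩ : ∃ n, gradedPiece S n ≠ ⊥ := by
      by_contra! h
      simp [h] at htop
    exact Finset.card_pos.2 ⟨n, by simpa [V] using hn⟩
  · obtain ⟨u, hu, hu0⟩ := exists_mem_ne_zero_of_ne_bot (hks ℓ)
    exact eq_of_mem_gradedPiece hS hu hu0 ▸ hodd u hu0
  · refine le_antisymm le_top (htop ▸ iSup_le fun n => ?_)
    by_cases hn : gradedPiece S n = ⊥
    · exact hn ▸ bot_le
    · obtain ⟨ℓ, rfl⟩ : n ∈ Set.range ks := by simpa [ks, V] using hn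
      exact le_iSup (fun ℓ => gradedPiece S (ks ℓ)) ℓ
end

section
/- Let G : ℝ → ℝ be a continuous function satisfying: (i) G(ζ + π) = G(ζ) for every ζ ∈ ℝ; (ii) G(π − ζ) = G(ζ) for every ζ ∈ ℝ; (iii) G(0) < 0 and G(π/2) > 0; (iv) G is strictly increasing on (π/4, π/2); (v) G is strictly increasing on every interval I ⊆ (0, π/2) such that G > 0 on I. Then there exists ζ₀ ∈ (0, π/2) such that G(ζ) > 0 for every ζ ∈ (ζ₀, π/2] and G(ζ) ≤ 0 for every ζ ∈ [0, ζ₀]; furthermore G(π/2) > G(ζ) for every ζ ∈ [0, π] ∖ {π/2}. -/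
open Real

/-- Left-limit comparison: if `c ≤ G` on `[a, b)` with `a < b` and `G` is continuous,
then `c ≤ G b`. -/
lemma stmt3_aux (G : ℝ → ℝ) (hcont : Continuous G) {a b c : ℝ} (hab : a < b)
    (h : ∀ t ∈ Set.Ico a b, c ≤ G t) : c ≤ G b := by
  have ht : Filter.Tendsto G (nhdsWithin b (Set.Iio b)) (nhds (G b)) :=
    (hcont.tendsto b).mono_left nhdsWithin_le_nhds
  refine ge_of_tendsto ht ?_
  filter_upwards [Ico_mem_nhdsLT_of_mem ⟨hab, le_refl b⟩] with t ht using h t ht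

/-- Abstract version of Corollary 4.2: a continuous function `G` which is `π`-periodic,
symmetric about `π/2`, negative at `0`, positive at `π/2`, strictly increasing on
`(π/4, π/2)` and strictly increasing on every interval of `(0, π/2)` where it is positive,
has a threshold `ζ₀ ∈ (0, π/2)` separating its nonpositivity and positivity regions on
`[0, π/2]`, and attains at `π/2` its strict maximum over `[0, π]`. -/
theorem stmt3 (G : ℝ → ℝ) (hcont : Continuous G)
    (hper : ∀ ζ : ℝ, G (ζ + π) = G ζ)
    (hsym : ∀ ζ : ℝ, G (π - ζ) = G ζ)
    (h0 : G 0 < 0) (hhalf : 0 < G (π / 2))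
    (hmono : StrictMonoOn G (Set.Ioo (π / 4) (π / 2)))
    (hmono' : ∀ I : Set ℝ, I.OrdConnected → I ⊆ Set.Ioo 0 (π / 2) →
      (∀ ζ ∈ I, 0 < G ζ) → StrictMonoOn G I) :
    ∃ ζ₀ ∈ Set.Ioo 0 (π / 2),
      (∀ ζ ∈ Set.Ioc ζ₀ (π / 2), 0 < G ζ) ∧
      (∀ ζ ∈ Set.Icc 0 ζ₀, G ζ ≤ 0) ∧
      (∀ ζ ∈ Set.Icc 0 π, ζ ≠ π / 2 → G ζ < G (π / 2)) := by
  have hπ : (0:ℝ) < π := Real.pi_pos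
  set S : Set ℝ := {t | t ∈ Set.Icc 0 (π / 2) ∧ G t ≤ 0} with hS
  have hSclosed : IsClosed S :=
    (isClosed_Icc.inter (isClosed_le hcont continuous_const))
  have hScompact : IsCompact S :=
    isCompact_Icc.of_isClosed_subset hSclosed (fun t ht => ht.1)
  have hSne : S.Nonempty := ⟨0, ⟨le_refl 0, by positivity⟩, h0.le⟩
  set ζ₀ : ℝ := sSup S with hζ₀def
  have hζ₀mem : ζ₀ ∈ S := hScompact.sSup_mem hSne
  -- ζ₀ > 0
  have hζ₀pos : 0 < ζ₀ := by
    have hopen : IsOpen {t | G t < 0} := isOpen_lt hcont continuous_const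
    obtain ⟨ε, hε, hball⟩ := Metric.isOpen_iff.mp hopen 0 h0
    set t : ℝ := min (ε / 2) (π / 4) with htdef
    have htpos : 0 < t := lt_min (by linarith) (by linarith)
    have htball : t ∈ Metric.ball (0:ℝ) ε := by
      simp only [Metric.mem_ball, Real.dist_eq, sub_zero, abs_of_pos htpos]
      exact lt_of_le_of_lt (min_le_left _ _) (by linarith)
    have htS : t ∈ S := by
      refine ⟨⟨htpos.le, ?_⟩, (hball htball).le⟩
      calc t ≤ π / 4 := min_le_right _ _
        _ ≤ π / 2 := by linarith
    exact lt_of_lt_of_le htpos (le_csSup hScompact.bddAbove htS)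
  -- ζ₀ < π/2
  have hζ₀lt : ζ₀ < π / 2 := by
    rcases lt_or_eq_of_le hζ₀mem.1.2 with h | h
    · exact h
    · exfalso; rw [h] at hζ₀mem; linarith [hζ₀mem.2]
  -- positivity on (ζ₀, π/2]
  have hpos : ∀ ζ ∈ Set.Ioc ζ₀ (π / 2), 0 < G ζ := by
    rintro ζ ⟨h1, h2⟩
    rcases lt_or_eq_of_le h2 with h2 | h2
    · by_contra hle
      push_neg at hle
      have : ζ ∈ S := ⟨⟨by linarith, h2.le⟩, hle⟩
      exact absurd (le_csSup hScompact.bddAbove this) (not_le.mpr h1)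
    · rw [h2]; exact hhalf
  -- nonpositivity on [0, ζ₀]
  have hneg : ∀ ζ ∈ Set.Icc 0 ζ₀, G ζ ≤ 0 := by
    rintro ζ ⟨h1, h2⟩
    by_contra hgt
    push_neg at hgt
    have hζpos : 0 < ζ := by
      rcases lt_or_eq_of_le h1 with h | h
      · exact h
      · exfalso; rw [← h] at hgt; linarith
    have hζne : ζ ≠ ζ₀ := by
      intro h; rw [h] at hgt; linarith [hζ₀mem.2]
    have hζlt : ζ < ζ₀ := lt_of_le_of_ne h2 hζne
    -- first point ≥ ζ where G ≤ 0
    set T : Set ℝ := {t | t ∈ Set.Icc ζ ζ₀ ∧ G t ≤ 0} with hT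
    have hTclosed : IsClosed T :=
      (isClosed_Icc.inter (isClosed_le hcont continuous_const))
    have hTcompact : IsCompact T :=
      isCompact_Icc.of_isClosed_subset hTclosed (fun t ht => ht.1)
    have hTne : T.Nonempty := ⟨ζ₀, ⟨hζlt.le, le_refl _⟩, hζ₀mem.2⟩
    set η : ℝ := sInf T with hηdef
    have hηmem : η ∈ T := hTcompact.sInf_mem hTne
    have hζη : ζ < η := by
      rcases lt_or_eq_of_le hηmem.1.1 with h | h
      · exact h
      · exfalso; rw [h] at hgt; linarith [hηmem.2]
    have hIsub : Set.Ico ζ η ⊆ Set.Ioo 0 (π / 2) := by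
      intro t ⟨ht1, ht2⟩
      exact ⟨lt_of_lt_of_le hζpos ht1, by linarith [hηmem.1.2]⟩
    have hIpos : ∀ t ∈ Set.Ico ζ η, 0 < G t := by
      rintro t ⟨ht1, ht2⟩
      by_contra hle
      push_neg at hle
      have : t ∈ T := ⟨⟨ht1, by linarith [hηmem.1.2]⟩, hle⟩
      exact absurd (csInf_le hTcompact.bddBelow this) (not_le.mpr ht2)
    have hSM : StrictMonoOn G (Set.Ico ζ η) :=
      hmono' _ Set.ordConnected_Ico hIsub hIpos
    have hGη : G ζ ≤ G η := by
      refine stmt3_aux G hcont hζη (fun t ht => ?_)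
      rcases lt_or_eq_of_le ht.1 with h | h
      · exact (hSM ⟨le_refl _, hζη⟩ ht h).le
      · rw [← h]
    linarith [hηmem.2]
  -- strict max on [0, π/2]
  have hmax : ∀ ζ ∈ Set.Icc 0 (π / 2), ζ ≠ π / 2 → G ζ < G (π / 2) := by
    rintro ζ ⟨h1, h2⟩ hne
    have h2' : ζ < π / 2 := lt_of_le_of_ne h2 hne
    rcases le_or_gt ζ ζ₀ with hle | hlt
    · exact lt_of_le_of_lt (hneg ζ ⟨h1, hle⟩) hhalf
    · -- ζ ∈ (ζ₀, π/2)
      have hSM : StrictMonoOn G (Set.Ioo ζ₀ (π / 2)) := by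
        refine hmono' _ Set.ordConnected_Ioo ?_ ?_
        · intro t ⟨ht1, ht2⟩; exact ⟨lt_trans hζ₀pos ht1, ht2⟩
        · intro t ⟨ht1, ht2⟩; exact hpos t ⟨ht1, ht2.le⟩
      set s : ℝ := (ζ + π / 2) / 2 with hsdef
      have hs1 : ζ < s := by simp only [hsdef]; linarith
      have hs2 : s < π / 2 := by simp only [hsdef]; linarith
      have hζs : G ζ < G s :=
        hSM ⟨hlt, h2'⟩ ⟨by linarith, hs2⟩ hs1
      have hsπ : G s ≤ G (π / 2) := by
        refine stmt3_aux G hcont hs2 (fun t ht => ?_)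
        rcases lt_or_eq_of_le ht.1 with h | h
        · exact (hSM ⟨by linarith, hs2⟩ ⟨by linarith [ht.1], ht.2⟩ h).le
        · rw [← h]
      linarith
  refine ⟨ζ₀, ⟨hζ₀pos, hζ₀lt⟩, hpos, hneg, ?_⟩
  rintro ζ ⟨h1, h2⟩ hne
  rcases le_or_gt ζ (π / 2) with h | h
  · exact hmax ζ ⟨h1, h⟩ hne
  · have := hsym ζ
    rw [← this]
    refine hmax (π - ζ) ⟨by linarith, by linarith⟩ ?_
    intro hc
    apply hne
    linarith
end

section
/- Let k be an odd positive natural number, let β_u, β_v ∈ ℝ ∖ {0} with β_v² ≤ β_u², and let ω_u, ω_v ∈ [0, 2π/k) with ω_u ≠ ω_v. Let G : ℝ → ℝ be a continuous function with G(ζ + π) = G(ζ) for every ζ ∈ ℝ, G(π/2) > 0, and such that G(π/2) > G(ζ) for every ζ ∈ [0, π] ∖ {π/2}. Define C_u(α) := 2β_u² · G((k/2)(α − ω_u)) and C_v(α) := 2β_v² · G((k/2)(α − ω_v)). Then there exists an interval I ⊂ ℝ with length 0 < |I| < 2π/k such that C_u(α) ≠ C_v(α) for every α ∈ I + (2π/k)ℤ.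 -/
open Real

/-! At `α₀ = ω_u + π/k` the argument of `G` in `C_u` is `π/2`, while the argument in `C_v` is
`π/2 + (k/2)(ω_u - ω_v)`, which is not congruent to `π/2` modulo `π` because the phases are
distinct in `[0, 2π/k)`. Hence `C_v(α₀) < 2β_v² G(π/2) ≤ C_u(α₀)`, so by continuity `C_v < C_u`
on a short interval around `α₀`, and both functions are `2π/k`-periodic. -/

open Set Function

lemma Function.Periodic.lt_of_forall_ne_add_int_mul {G : ℝ → ℝ} {p c ζ : ℝ}
    (hG : Periodic G p) (hp : 0 < p) (hmax : ∀ ζ ∈ Icc 0 p, ζ ≠ c → G ζ < G c)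
    (hζ : ∀ m : ℤ, ζ ≠ c + m * p) : G ζ < G c := by
  have hmod : G (toIcoMod hp 0 ζ) = G ζ := hG.sub_zsmul_eq _
  refine hmod ▸ hmax _ (Ico_subset_Icc_self (toIcoMod_mem_Ico' hp ζ)) fun h => ?_
  refine hζ (toIcoDiv hp 0 ζ) ?_
  rw [← h, ← self_sub_toIcoDiv_zsmul, zsmul_eq_mul]
  ring

lemma sub_ne_int_mul_of_mem_Ico {a p x y : ℝ} (hp : 0 < p) (hx : x ∈ Ico a (a + p))
    (hy : y ∈ Ico a (a + p)) (hxy : x ≠ y) (m : ℤ) : x - y ≠ m * p := by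
  intro h
  apply hxy
  calc x = toIcoMod hp a x := ((toIcoMod_eq_self hp).2 hx).symm
    _ = toIcoMod hp a (y + m • p) := by rw [zsmul_eq_mul, ← h, add_sub_cancel]
    _ = toIcoMod hp a y := toIcoMod_add_zsmul hp a y m
    _ = y := (toIcoMod_eq_self hp).2 hy

lemma Function.Periodic.comp_mul_sub {G : ℝ → ℝ} {p : ℝ} (hG : Periodic G p)
    {a : ℝ} (ha : a ≠ 0) (ω : ℝ) : Periodic (fun α => G (a * (α - ω))) (p / a) := by
  intro α
  change G (a * (α + p / a - ω)) = G (a * (α - ω))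
  rw [show a * (α + p / a - ω) = a * (α - ω) + p by field_simp; ring]
  exact hG _

lemma exists_Ioo_subset_of_mem_nhds_of_sub_lt {s : Set ℝ} {x L : ℝ} (hs : s ∈ nhds x)
    (hL : 0 < L) : ∃ a b, a < b ∧ b - a < L ∧ Ioo a b ⊆ s := by
  obtain ⟨ε, hε, hball⟩ := Metric.mem_nhds_iff.mp hs
  set δ := min ε (L / 4)
  have hδ : 0 < δ := lt_min hε (by positivity)
  refine ⟨x - δ, x + δ, by linarith, by linarith [min_le_right ε (L / 4)], ?_⟩
  rw [← Real.ball_eq_Ioo]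
  exact (Metric.ball_subset_ball (min_le_left _ _)).trans hball

theorem stmt5_general (k : ℕ) (hk0 : 0 < k)
    (βu βv ωu ωv : ℝ) (hβv : βv ≠ 0) (hββ : βv ^ 2 ≤ βu ^ 2)
    (hωu : ωu ∈ Set.Ico 0 (2 * π / (k : ℝ))) (hωv : ωv ∈ Set.Ico 0 (2 * π / (k : ℝ)))
    (hωuv : ωu ≠ ωv)
    (G : ℝ → ℝ) (hG : Continuous G) (hper : ∀ ζ : ℝ, G (ζ + π) = G ζ)
    (hGhalf : 0 < G (π / 2))
    (hmax : ∀ ζ ∈ Set.Icc 0 π, ζ ≠ π / 2 → G ζ < G (π / 2))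
    (Cu Cv : ℝ → ℝ)
    (hCu : ∀ α : ℝ, Cu α = 2 * βu ^ 2 * G (((k : ℝ) / 2) * (α - ωu)))
    (hCv : ∀ α : ℝ, Cv α = 2 * βv ^ 2 * G (((k : ℝ) / 2) * (α - ωv))) :
    ∃ a b : ℝ, a < b ∧ b - a < 2 * π / (k : ℝ) ∧
      ∀ α ∈ Set.Ioo a b, ∀ n : ℤ,
        Cu (α + n * (2 * π / (k : ℝ))) ≠ Cv (α + n * (2 * π / (k : ℝ))) := by
  obtain rfl : Cu = _ := funext hCu
  obtain rfl : Cv = _ := funext hCv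
  have hk : (0 : ℝ) < k := by exact_mod_cast hk0
  have hT : π / ((k : ℝ) / 2) = 2 * π / k := by field_simp
  have hTpos : 0 < 2 * π / k := by positivity
  have hperiodic : ∀ (β ω : ℝ), Periodic (fun α => 2 * β ^ 2 * G ((k : ℝ) / 2 * (α - ω)))
      (2 * π / k) := fun β ω =>
    hT ▸ ((Periodic.comp_mul_sub hper (by positivity) ω).comp (2 * β ^ 2 * ·))
  have hv : G ((k : ℝ) / 2 * (ωu + π / k - ωv)) < G (π / 2) := by
    refine Periodic.lt_of_forall_ne_add_int_mul hper pi_pos hmax fun m h => ?_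
    refine sub_ne_int_mul_of_mem_Ico hTpos (by rwa [zero_add]) (by rwa [zero_add]) hωuv m ?_
    field_simp at h ⊢
    linarith
  have hα₀ : 2 * βv ^ 2 * G ((k : ℝ) / 2 * (ωu + π / k - ωv)) <
      2 * βu ^ 2 * G ((k : ℝ) / 2 * (ωu + π / k - ωu)) := by
    rw [show (k : ℝ) / 2 * (ωu + π / k - ωu) = π / 2 by field_simp; ring]
    calc 2 * βv ^ 2 * G ((k : ℝ) / 2 * (ωu + π / k - ωv))
        < 2 * βv ^ 2 * G (π / 2) := mul_lt_mul_of_pos_left hv (by positivity)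
      _ ≤ 2 * βu ^ 2 * G (π / 2) := by gcongr
  have hcont : ∀ (β ω : ℝ), Continuous fun α => 2 * β ^ 2 * G ((k : ℝ) / 2 * (α - ω)) :=
    fun β ω => by fun_prop
  obtain ⟨a, b, hab, hlen, hsub⟩ := exists_Ioo_subset_of_mem_nhds_of_sub_lt
    ((isOpen_lt (hcont βv ωv) (hcont βu ωu)).mem_nhds hα₀) hTpos
  refine ⟨a, b, hab, hlen, fun α hα n => ?_⟩
  rw [(hperiodic βu ωu).int_mul n α, (hperiodic βv ωv).int_mul n α]
  exact (hsub hα).ne'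

/-- Abstract version of Theorem 4.3(ii): for odd `k`, nonzero `β_u, β_v` with
`β_v² ≤ β_u²`, distinct phases `ω_u ≠ ω_v` in `[0, 2π/k)`, and a continuous `π`-periodic
function `G` attaining at `π/2` its strict maximum over a period, the functions
`C_u(α) = 2β_u² G((k/2)(α − ω_u))` and `C_v(α) = 2β_v² G((k/2)(α − ω_v))` differ on all
`(2π/k)`-translates of some interval of positive length `< 2π/k`. -/
theorem stmt5 (k : ℕ) (hk : Odd k) (hk0 : 0 < k)
    (βu βv ωu ωv : ℝ) (hβu : βu ≠ 0) (hβv : βv ≠ 0) (hββ : βv ^ 2 ≤ βu ^ 2)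
    (hωu : ωu ∈ Set.Ico 0 (2 * π / (k : ℝ))) (hωv : ωv ∈ Set.Ico 0 (2 * π / (k : ℝ)))
    (hωuv : ωu ≠ ωv)
    (G : ℝ → ℝ) (hG : Continuous G) (hper : ∀ ζ : ℝ, G (ζ + π) = G ζ)
    (hGhalf : 0 < G (π / 2))
    (hmax : ∀ ζ ∈ Set.Icc 0 π, ζ ≠ π / 2 → G ζ < G (π / 2))
    (Cu Cv : ℝ → ℝ)
    (hCu : ∀ α : ℝ, Cu α = 2 * βu ^ 2 * G (((k : ℝ) / 2) * (α - ωu)))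
    (hCv : ∀ α : ℝ, Cv α = 2 * βv ^ 2 * G (((k : ℝ) / 2) * (α - ωv))) :
    ∃ a b : ℝ, a < b ∧ b - a < 2 * π / (k : ℝ) ∧
      ∀ α ∈ Set.Ioo a b, ∀ n : ℤ,
        Cu (α + n * (2 * π / (k : ℝ))) ≠ Cv (α + n * (2 * π / (k : ℝ))) :=
  stmt5_general k hk0 βu βv ωu ωv hβv hββ hωu hωv hωuv G hG hper hGhalf hmax Cu Cv hCu hCv
end
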